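/- Let p be a homogeneous polynomial of degree d in n variables, with p_min = min_{x ∈ Δ_{n−1}} p(x) and p_max = max_{x ∈ Δ_{n−1}} p(x). Then B(p) − p_min ≤ C(2d−1, d) · d^d · ( p_max − p_min ), where C(2d−1,d) is the binomial coefficient. -/

import Mathlib

/-!
For `|α| = d`, the number `α! p_α` is the mixed forward difference
`∑_{β ≤ α} (-1)^{d-|β|} C(α,β) p(β)` of `p` over the lattice points `β ≤ α`. Apply it to
`q = p - p_min (x₁ + ⋯ + xₙ)^d`, for which `α! q_α = α! p_α - d! p_min`. On the simplex `q` takes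
values in `[0, p_max - p_min]`, so by homogeneity `0 ≤ q(β) = |β|^d q(β/|β|) ≤ d^d (p_max - p_min)`
for `β ≠ 0`, while `q(0) = 0`. Bounding each signed term by its absolute value and summing the
`2^d - 1` weights `C(α,β)`, `β ≠ 0`, gives `α! p_α - d! p_min ≤ (2^d - 1) d^d (p_max - p_min)`,
and `2^d - 1 ≤ d^d ≤ d(d+1)⋯(2d-1) = d! C(2d-1,d)`.
-/

open MvPolynomial

/-- For a homogeneous polynomial `p = ∑_{|α| = d} p_α x^α` of degree `d`,
`B(p) = max_{|α| = d} (α₁!⋯αₙ!/d!)·p_α`. -/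
noncomputable def Bcoef {n : ℕ} (d : ℕ) (p : MvPolynomial (Fin n) ℝ) : ℝ :=
  sSup {c : ℝ | ∃ α : Fin n →₀ ℕ, (∑ i, α i) = d ∧
    c = ((∏ i, Nat.factorial (α i) : ℕ) : ℝ) / (Nat.factorial d : ℝ) * coeff α p}

open Finset fwdDiff
open scoped Nat

theorem sum_range_neg_one_pow_mul_choose_mul_pow {R : Type*} [CommRing R] {a g : ℕ} (hg : g ≤ a) :
    ∑ b ∈ range (a + 1), (-1 : R) ^ (a - b) * a.choose b * (b : R) ^ g =
      if g = a then (a ! : R) else 0 := by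
  have h := fwdDiff_iter_eq_sum_shift (1 : R) (fun r : R => r ^ g) a 0
  simp only [zero_add, nsmul_one, zsmul_eq_mul] at h
  push_cast at h
  rw [← h]
  rcases hg.lt_or_eq with hlt | rfl
  · rw [fwdDiff_iter_pow_eq_zero_of_lt hlt, if_neg hlt.ne]; rfl
  · rw [fwdDiff_iter_eq_factorial, if_pos rfl]; rfl

theorem two_pow_le_factorial_mul_choose_add_one (d : ℕ) :
    2 ^ d ≤ d ! * (2 * d - 1).choose d + 1 := by
  rcases d with _ | e
  · simp
  have hasc : (e + 1) ^ (e + 1) ≤ (e + 1)! * (2 * (e + 1) - 1).choose (e + 1) := by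
    rw [show 2 * (e + 1) - 1 = e + (e + 1) by omega, ← Nat.ascFactorial_eq_factorial_mul_choose]
    exact Nat.pow_succ_le_ascFactorial _ _
  have hpow : 2 ^ (e + 1) ≤ (e + 1) ^ (e + 1) + 1 := by
    rcases e with _ | e
    · simp
    · exact (Nat.pow_le_pow_left (by omega) _).trans (Nat.le_succ _)
  omega

theorem MvPolynomial.IsHomogeneous.eval_smul {σ R : Type*} [CommSemiring R]
    {p : MvPolynomial σ R} {n : ℕ} (hp : p.IsHomogeneous n) (c : R) (x : σ → R) :
    eval (c • x) p = c ^ n * eval x p := by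
  simp only [eval_eq, mul_sum]
  refine sum_congr rfl fun s hs => ?_
  rw [hp.degree_eq_sum_deg_support hs, ← prod_pow_eq_pow_sum, mul_left_comm, ← prod_mul_distrib]
  simp only [Pi.smul_apply, smul_eq_mul, mul_pow]

theorem exists_natCast_eq_smul_mem_stdSimplex {ι : Type*} [Fintype ι] {β : ι → ℕ} (hβ : β ≠ 0) :
    ∃ x ∈ stdSimplex ℝ ι, (fun i => (β i : ℝ)) = (∑ i, (β i : ℝ)) • x := by
  have hs : (0 : ℝ) < ∑ i, (β i : ℝ) := by
    exact_mod_cast pos_iff_ne_zero.2 fun h => hβ (funext (sum_eq_zero_iff.1 h · (mem_univ _)))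
  refine ⟨fun i => β i / ∑ j, (β j : ℝ), ⟨fun i => by positivity, ?_⟩, ?_⟩
  · rw [← sum_div, div_self hs.ne']
  · ext i
    simp only [Pi.smul_apply, smul_eq_mul]
    field_simp

theorem eval_natCast_mem_Icc {ι : Type*} [Fintype ι] {q : MvPolynomial ι ℝ} {d : ℕ}
    (hq : q.IsHomogeneous d) {M : ℝ}
    (hq_nonneg : ∀ x ∈ stdSimplex ℝ ι, 0 ≤ eval x q) (hq_le : ∀ x ∈ stdSimplex ℝ ι, eval x q ≤ M)
    {β : ι → ℕ} (hβ : β ≠ 0) (hβd : ∑ i, β i ≤ d) :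
    eval (fun i => (β i : ℝ)) q ∈ Set.Icc 0 (d ^ d * M) := by
  obtain ⟨x, hx, hβx⟩ := exists_natCast_eq_smul_mem_stdSimplex hβ
  have hval : eval (fun i => (β i : ℝ)) q = (∑ i, (β i : ℝ)) ^ d * eval x q := by
    conv_lhs => rw [hβx, hq.eval_smul]
  rw [hval]
  refine ⟨mul_nonneg (by positivity) (hq_nonneg x hx), ?_⟩
  gcongr
  · exact hq_nonneg x hx
  · exact_mod_cast hβd
  · exact hq_le x hx

theorem prod_factorial_mul_coeff_sum_X_pow {ι R : Type*} [Fintype ι] [CommSemiring R]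
    {α : ι →₀ ℕ} {d : ℕ} (hα : ∑ i, α i = d) :
    (∏ i, ((α i)! : R)) * coeff α ((∑ i, X i : MvPolynomial ι R) ^ d) = d ! := by
  rw [coeff_sum_X_pow_of_fintype, if_pos (by rwa [Finsupp.sum_fintype _ _ fun _ => rfl]),
    Finsupp.multinomial_eq_of_support_subset (subset_univ _), ← hα]
  exact_mod_cast congrArg (Nat.cast : ℕ → R) (Nat.multinomial_spec univ α)

section MixedFwdDiff

variable {ι : Type*} [Fintype ι] [DecidableEq ι]

/-- The mixed forward difference `Δ₁^{α₁} ⋯ Δₙ^{αₙ} f` at the origin. -/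
noncomputable def mixedFwdDiff (α : ι →₀ ℕ) (f : (ι → ℝ) → ℝ) : ℝ :=
  ∑ β ∈ Fintype.piFinset fun i => range (α i + 1),
    (∏ i, (-1 : ℝ) ^ (α i - β i) * (α i).choose (β i)) * f fun i => β i

theorem mixedFwdDiff_prod_pow {α γ : ι →₀ ℕ} (h : ∑ i, γ i = ∑ i, α i) :
    mixedFwdDiff α (fun x => ∏ i, x i ^ γ i) = if γ = α then ∏ i, ((α i)! : ℝ) else 0 := by
  have hfactor : mixedFwdDiff α (fun x => ∏ i, x i ^ γ i) =
      ∏ i, ∑ b ∈ range (α i + 1), (-1 : ℝ) ^ (α i - b) * (α i).choose b * (b : ℝ) ^ γ i := by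
    rw [prod_univ_sum]
    exact sum_congr rfl fun β _ => prod_mul_distrib.symm
  rw [hfactor]
  split_ifs with hγα
  · subst hγα
    exact prod_congr rfl fun i _ => by
      rw [sum_range_neg_one_pow_mul_choose_mul_pow le_rfl, if_pos rfl]
  · obtain ⟨i, hi⟩ : ∃ i, γ i < α i := by
      by_contra! hle
      refine hγα (Finsupp.ext fun i => ?_)
      exact ((sum_eq_sum_iff_of_le fun i _ => hle i).1 h.symm i (mem_univ i)).symm
    exact prod_eq_zero (mem_univ i) (by
      rw [sum_range_neg_one_pow_mul_choose_mul_pow hi.le, if_neg hi.ne])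

theorem mixedFwdDiff_eval {α : ι →₀ ℕ} {p : MvPolynomial ι ℝ}
    (hp : p.IsHomogeneous (∑ i, α i)) :
    mixedFwdDiff α (fun x => eval x p) = (∏ i, ((α i)! : ℝ)) * coeff α p := by
  have hdeg : ∀ γ ∈ p.support, ∑ i, γ i = ∑ i, α i := fun γ hγ => by
    rw [← Finsupp.degree_eq_sum]
    exact (hp.degree_eq_sum_deg_support hγ).symm
  calc mixedFwdDiff α (fun x => eval x p)
      = ∑ γ ∈ p.support, coeff γ p * mixedFwdDiff α (fun x => ∏ i, x i ^ γ i) := by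
        simp only [mixedFwdDiff, eval_eq', mul_sum]
        rw [sum_comm]
        exact sum_congr rfl fun _ _ => sum_congr rfl fun _ _ => by ring
    _ = (∏ i, ((α i)! : ℝ)) * coeff α p := by
        rw [sum_eq_single α]
        · rw [mixedFwdDiff_prod_pow rfl, if_pos rfl, mul_comm]
        · intro γ hγ hγα
          rw [mixedFwdDiff_prod_pow (hdeg γ hγ), if_neg hγα, mul_zero]
        · intro hα
          rw [notMem_support_iff.1 hα, zero_mul]

theorem sum_prod_choose (α : ι →₀ ℕ) :
    ∑ β ∈ Fintype.piFinset (fun i => range (α i + 1)), ∏ i, ((α i).choose (β i) : ℝ) =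
      2 ^ ∑ i, α i := by
  rw [← prod_univ_sum (fun i => range (α i + 1)) fun i b => ((α i).choose b : ℝ),
    ← prod_pow_eq_pow_sum]
  exact prod_congr rfl fun i _ => by exact_mod_cast Nat.sum_range_choose (α i)

theorem prod_factorial_mul_coeff_le_of_pos {q : MvPolynomial ι ℝ} {d : ℕ}
    (hq : q.IsHomogeneous d) (hd : 0 < d) {M : ℝ}
    (hq_nonneg : ∀ x ∈ stdSimplex ℝ ι, 0 ≤ eval x q) (hq_le : ∀ x ∈ stdSimplex ℝ ι, eval x q ≤ M)
    {α : ι →₀ ℕ} (hα : ∑ i, α i = d) :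
    (∏ i, ((α i)! : ℝ)) * coeff α q ≤ (2 ^ d - 1) * d ^ d * M := by
  set T := Fintype.piFinset fun i => range (α i + 1)
  have h0 : constantCoeff q = 0 := by
    simpa [zero_pow hd.ne'] using hq.eval_smul 0 0
  have hterm : ∀ β ∈ T, β ≠ 0 →
      (∏ i, (-1 : ℝ) ^ (α i - β i) * (α i).choose (β i)) * eval (fun i => (β i : ℝ)) q ≤
        (∏ i, ((α i).choose (β i) : ℝ)) * (d ^ d * M) := by
    intro β hβT hβ
    have hβd : ∑ i, β i ≤ d := hα ▸ sum_le_sum fun i _ =>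
      Nat.lt_succ_iff.1 (mem_range.1 (Fintype.mem_piFinset.1 hβT i))
    obtain ⟨hval_nonneg, hval_le⟩ := eval_natCast_mem_Icc hq hq_nonneg hq_le hβ hβd
    calc (∏ i, (-1 : ℝ) ^ (α i - β i) * (α i).choose (β i)) * eval (fun i => (β i : ℝ)) q
        ≤ (∏ i, ((α i).choose (β i) : ℝ)) * eval (fun i => (β i : ℝ)) q :=
          mul_le_mul_of_nonneg_right ((le_abs_self _).trans_eq (by simp [abs_prod])) hval_nonneg
      _ ≤ (∏ i, ((α i).choose (β i) : ℝ)) * (d ^ d * M) :=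
          mul_le_mul_of_nonneg_left hval_le (by positivity)
  have hchoose : ∑ β ∈ T.erase 0, ∏ i, ((α i).choose (β i) : ℝ) = 2 ^ d - 1 := by
    rw [sum_erase_eq_sub (by simp [T]), sum_prod_choose, hα]
    simp
  rw [← hα, ← mixedFwdDiff_eval (hα ▸ hq), mixedFwdDiff, hα,
    ← sum_erase (a := (0 : ι → ℕ)) _ (by simp [h0])]
  calc _ ≤ ∑ β ∈ T.erase 0, (∏ i, ((α i).choose (β i) : ℝ)) * (d ^ d * M) :=
        sum_le_sum fun β hβ => hterm β (mem_of_mem_erase hβ) (ne_of_mem_erase hβ)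
    _ = (2 ^ d - 1) * d ^ d * M := by rw [← sum_mul, hchoose, mul_assoc]

theorem prod_factorial_mul_coeff_le {q : MvPolynomial ι ℝ} {d : ℕ} (hq : q.IsHomogeneous d)
    (hΔ : (stdSimplex ℝ ι).Nonempty) {M : ℝ}
    (hq_nonneg : ∀ x ∈ stdSimplex ℝ ι, 0 ≤ eval x q) (hq_le : ∀ x ∈ stdSimplex ℝ ι, eval x q ≤ M)
    {α : ι →₀ ℕ} (hα : ∑ i, α i = d) :
    (∏ i, ((α i)! : ℝ)) * coeff α q ≤ d ! * (2 * d - 1).choose d * d ^ d * M := by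
  obtain ⟨x₀, hx₀⟩ := hΔ
  rcases d.eq_zero_or_pos with rfl | hd
  · obtain rfl : α = 0 := Finsupp.ext fun i => sum_eq_zero_iff.1 hα i (mem_univ i)
    have hconst : coeff 0 q = eval x₀ q := by simpa [constantCoeff_eq] using hq.eval_smul 0 x₀
    simpa [hconst] using hq_le x₀ hx₀
  have hM : 0 ≤ M := (hq_nonneg x₀ hx₀).trans (hq_le x₀ hx₀)
  have hcomb : (2 : ℝ) ^ d - 1 ≤ d ! * (2 * d - 1).choose d := by
    have h : ((2 ^ d : ℕ) : ℝ) ≤ ((d ! * (2 * d - 1).choose d + 1 : ℕ) : ℝ) := by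
      exact_mod_cast two_pow_le_factorial_mul_choose_add_one d
    push_cast at h
    linarith
  calc _ ≤ (2 ^ d - 1) * d ^ d * M := prod_factorial_mul_coeff_le_of_pos hq hd hq_nonneg hq_le hα
    _ ≤ _ := by gcongr

end MixedFwdDiff

/-- **Theorem (bound on `B(p) - p_min` over the simplex).**
For a homogeneous polynomial `p` of degree `d` with minimum `p_min` and maximum `p_max`
over the simplex, `B(p) - p_min ≤ C(2d-1,d)·d^d·(p_max - p_min)`. -/
theorem Bcoef_sub_min_le
    {n d : ℕ} (hn : 0 < n)
    (p : MvPolynomial (Fin n) ℝ) (hp : p.IsHomogeneous d)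
    (Δ : Set (Fin n → ℝ)) (hΔ : Δ = {x : Fin n → ℝ | (∀ i, 0 ≤ x i) ∧ ∑ i, x i = 1})
    (pmin pmax : ℝ)
    (hpmin : pmin = sInf ((fun x => eval x p) '' Δ))
    (hpmax : pmax = sSup ((fun x => eval x p) '' Δ)) :
    Bcoef d p - pmin ≤ ((2 * d - 1).choose d : ℝ) * (d : ℝ) ^ d * (pmax - pmin) := by
  obtain rfl : Δ = stdSimplex ℝ (Fin n) := hΔ
  have hΔ : (stdSimplex ℝ (Fin n)).Nonempty := ⟨_, ite_eq_mem_stdSimplex ℝ (⟨0, hn⟩ : Fin n)⟩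
  have hK : IsCompact ((fun x => eval x p) '' stdSimplex ℝ (Fin n)) :=
    (isCompact_stdSimplex _ _).image (continuous_eval p)
  have hmin : ∀ x ∈ stdSimplex ℝ (Fin n), pmin ≤ eval x p := fun x hx =>
    hpmin ▸ csInf_le hK.bddBelow ⟨x, hx, rfl⟩
  have hmax : ∀ x ∈ stdSimplex ℝ (Fin n), eval x p ≤ pmax := fun x hx =>
    hpmax ▸ le_csSup hK.bddAbove ⟨x, hx, rfl⟩
  set q := p - C pmin * (∑ i, X i) ^ d
  have hsum : (∑ i, X i : MvPolynomial (Fin n) ℝ).IsHomogeneous 1 :=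
    IsHomogeneous.sum univ X 1 fun i _ => isHomogeneous_X ℝ i
  have hq : q.IsHomogeneous d := hp.sub (by simpa using (hsum.pow d).C_mul pmin)
  have hq_eval : ∀ x ∈ stdSimplex ℝ (Fin n), eval x q = eval x p - pmin := fun x hx => by
    simp [q, hx.2]
  rw [sub_le_iff_le_add, Bcoef]
  refine csSup_le ⟨_, Finsupp.single ⟨0, hn⟩ d, by simp, rfl⟩ ?_
  rintro _ ⟨α, hα, rfl⟩
  have hbound := prod_factorial_mul_coeff_le hq hΔ (M := pmax - pmin)
    (fun x hx => by linarith [hq_eval x hx, hmin x hx])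
    (fun x hx => by linarith [hq_eval x hx, hmax x hx]) hα
  rw [coeff_sub, coeff_C_mul, mul_sub, mul_left_comm,
    prod_factorial_mul_coeff_sum_X_pow hα] at hbound
  push_cast
  rw [div_mul_eq_mul_div, div_le_iff₀ (by positivity)]
  linarith
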